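/- arXiv:1301.1157 — 2 statements merged into one kernel-verified Lean document; each statement's English description precedes it below -/
import Mathlib

section
/- Let G be a prime graph and a, b two distinct vertices not in V(G). Then there exists a prime extension H of G to V(G) ∪ {a, b} in which a and b are non-adjacent. -/
/-- `M` is a module of `G`: every vertex outside `M` is adjacent to all of `M` or to none. -/
def SimpleGraph.IsModule {V : Type*} (G : SimpleGraph V) (M : Set V) : Prop :=
  ∀ v ∉ M, (∀ m ∈ M, G.Adj v m) ∨ (∀ m ∈ M, ¬ G.Adj v m)

/-- `G` is prime: at least 4 vertices and all modules are trivial. -/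
def SimpleGraph.IsPrimeGraph {V : Type*} [Fintype V] (G : SimpleGraph V) : Prop :=
  4 ≤ Fintype.card V ∧
    ∀ M : Set V, G.IsModule M → M = ∅ ∨ (∃ v, M = {v}) ∨ M = Set.univ

/-- `H` on `V ⊕ W` is an extension of `G` on `V`: it induces `G` on the `inl` copy of `V`. -/
def SimpleGraph.IsExtension {V W : Type*} (G : SimpleGraph V) (H : SimpleGraph (V ⊕ W)) : Prop :=
  ∀ u v : V, H.Adj (Sum.inl u) (Sum.inl v) ↔ G.Adj u v

/-- The prime bound of `G`: the least `p` such that `G` has a prime `p`-extension. -/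
noncomputable def SimpleGraph.primeBound {V : Type*} [Fintype V] (G : SimpleGraph V) : ℕ :=
  sInf {p : ℕ | ∃ H : SimpleGraph (V ⊕ Fin p), G.IsExtension H ∧ H.IsPrimeGraph}

/-- The modular clique number: largest size of a module of `G` that is a clique. -/
noncomputable def SimpleGraph.modularCliqueNumber {V : Type*} [Fintype V]
    (G : SimpleGraph V) : ℕ :=
  sSup {n : ℕ | ∃ M : Set V, G.IsModule M ∧ G.IsClique M ∧ M.ncard = n}

/-- The modular stability number: `ω_M` of the complement. -/
noncomputable def SimpleGraph.modularStabilityNumber {V : Type*} [Fintype V]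
    (G : SimpleGraph V) : ℕ :=
  Gᶜ.modularCliqueNumber

/-- The number of isolated vertices of `G`. -/
noncomputable def SimpleGraph.isolatedCount {V : Type*} [Fintype V] (G : SimpleGraph V) : ℕ :=
  {v : V | ∀ w, ¬ G.Adj v w}.ncard

/-- `P` is a modular partition of `G`. -/
def SimpleGraph.IsModularPartition {V : Type*} (G : SimpleGraph V) (P : Set (Set V)) : Prop :=
  (∀ X ∈ P, X.Nonempty) ∧ ⋃₀ P = Set.univ ∧ P.Pairwise Disjoint ∧ ∀ X ∈ P, G.IsModule X

/-- The quotient graph `G/P` of a (modular) partition `P`. -/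
def SimpleGraph.quotientGraph {V : Type*} (G : SimpleGraph V) (P : Set (Set V)) :
    SimpleGraph P where
  Adj X Y := (X : Set V) ≠ (Y : Set V) ∧ ∃ u ∈ (X : Set V), ∃ v ∈ (Y : Set V), G.Adj u v
  symm := by
    constructor
    rintro X Y ⟨hne, u, hu, v, hv, h⟩
    exact ⟨fun h' => hne h'.symm, v, hv, u, hu, h.symm⟩
  loopless := by
    constructor
    rintro X ⟨hne, -⟩
    exact hne rfl

/-- `M` is a strong module of `G`. -/
def SimpleGraph.IsStrongModule {V : Type*} (G : SimpleGraph V) (M : Set V) : Prop :=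
  G.IsModule M ∧ ∀ N : Set V, G.IsModule N → (M ∩ N).Nonempty → M ⊆ N ∨ N ⊆ M

/-!
Choose a vertex `u` of `G` such that no vertex `x ≠ u` has neighbourhood exactly `V ∖ {x, u}`.
Such a `u` exists: if `x` is such a vertex for `u` and `y` one for `x`, then either `y = u` and
`{x, u}` is a module, or `x` and `y` are adjacent and non-adjacent at once.

Add a vertex `a = inr true` adjacent to every vertex of `G` but `u`, and a vertex `b = inr false`
adjacent to `u` only. A module `M` of the extension restricts to a module of `G`, hence to `∅`, a
singleton or all of `V`, and the adjacencies of `a` and `b` leave `M` trivial in each case; the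
only delicate one, `M = {a, x}`, would force `x` to have neighbourhood `V ∖ {x, u}`.
-/

open Set Sum

namespace SimpleGraph

variable {V W : Type*}

section Module

variable {G : SimpleGraph V}

lemma IsModule.adj_iff_adj {M : Set V} (hM : G.IsModule M) {z x y : V} (hz : z ∉ M)
    (hx : x ∈ M) (hy : y ∈ M) : G.Adj z x ↔ G.Adj z y := by
  rcases hM z hz with h | h
  · exact iff_of_true (h x hx) (h y hy)
  · exact iff_of_false (h x hx) (h y hy)

lemma IsModule.preimage {H : SimpleGraph W} {f : V → W}
    (hf : ∀ u v, H.Adj (f u) (f v) ↔ G.Adj u v) {M : Set W} (hM : H.IsModule M) :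
    G.IsModule (f ⁻¹' M) := by
  intro v hv
  rcases hM (f v) hv with h | h
  · exact Or.inl fun m hm => (hf v m).1 (h _ hm)
  · exact Or.inr fun m hm => mt (hf v m).2 (h _ hm)

end Module

section Prime

variable [Fintype V] {G : SimpleGraph V}

lemma isPrimeGraph_iff : G.IsPrimeGraph ↔
    4 ≤ Fintype.card V ∧ ∀ M, G.IsModule M → M.Subsingleton ∨ M = univ := by
  refine and_congr_right' (forall₂_congr fun M _ => ?_)
  rw [← or_assoc, subsingleton_iff_eq_empty_or_singleton]

lemma IsPrimeGraph.subsingleton_or_eq_univ (hG : G.IsPrimeGraph) {M : Set V}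
    (hM : G.IsModule M) : M.Subsingleton ∨ M = univ :=
  (isPrimeGraph_iff.1 hG).2 M hM

lemma IsPrimeGraph.exists_ne_ne (hG : G.IsPrimeGraph) (x y : V) : ∃ z, z ≠ x ∧ z ≠ y := by
  classical
  have hcard : ({x, y} : Finset V).card < (Finset.univ : Finset V).card := by
    rw [Finset.card_univ]
    linarith [Finset.card_le_two (a := x) (b := y), hG.1]
  obtain ⟨z, -, hz⟩ := Finset.exists_mem_notMem_of_card_lt_card hcard
  exact ⟨z, by simpa [not_or] using hz⟩

lemma IsPrimeGraph.exists_adj (hG : G.IsPrimeGraph) (x : V) : ∃ y, G.Adj x y := by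
  by_contra! hx
  have hM : G.IsModule {x}ᶜ := fun v hv => Or.inr fun m _ => by
    rw [notMem_compl_iff, mem_singleton_iff] at hv
    exact hv ▸ hx m
  obtain ⟨y, hyx, -⟩ := hG.exists_ne_ne x x
  obtain ⟨z, hzx, hzy⟩ := hG.exists_ne_ne x y
  rcases hG.subsingleton_or_eq_univ hM with h | h
  · exact hzy (h hzx hyx)
  · exact (h ▸ mem_univ x : x ∈ ({x}ᶜ : Set V)) rfl

lemma IsPrimeGraph.eq_of_isModule_pair (hG : G.IsPrimeGraph) {x y : V}
    (hM : G.IsModule {x, y}) : x = y := by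
  obtain ⟨z, hzx, hzy⟩ := hG.exists_ne_ne x y
  rcases hG.subsingleton_or_eq_univ hM with h | h
  · exact h (by simp) (by simp)
  · have : z ∈ ({x, y} : Set V) := h ▸ mem_univ z
    simp [hzx, hzy] at this

lemma IsPrimeGraph.exists_forall_neighborSet_ne (hG : G.IsPrimeGraph) :
    ∃ u, ∀ x ≠ u, G.neighborSet x ≠ {x, u}ᶜ := by
  have adj_iff {z w : V} (h : G.neighborSet z = {z, w}ᶜ) (v : V) :
      G.Adj z v ↔ v ≠ z ∧ v ≠ w := by
    rw [← mem_neighborSet, h]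
    simp [not_or]
  by_contra! h
  obtain ⟨u⟩ : Nonempty V := Fintype.card_pos_iff.1 (by linarith [hG.1])
  obtain ⟨x, hxu, hx⟩ := h u
  obtain ⟨y, hyx, hy⟩ := h x
  obtain rfl | hyu := eq_or_ne y u
  · refine hxu (hG.eq_of_isModule_pair fun v hv => Or.inl ?_)
    simp only [mem_insert_iff, mem_singleton_iff, not_or] at hv
    rintro m (rfl | rfl)
    · exact ((adj_iff hx v).2 hv).symm
    · exact ((adj_iff hy v).2 hv.symm).symm
  · exact ((adj_iff hy x).1 ((adj_iff hx y).2 ⟨hyx, hyu⟩).symm).2 rfl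

end Prime

def extendByConeAndPendant (G : SimpleGraph V) (u : V) : SimpleGraph (V ⊕ Bool) where
  Adj
    | .inl v, .inl w => G.Adj v w
    | .inl v, .inr b | .inr b, .inl v => bif b then v ≠ u else v = u
    | .inr _, .inr _ => False
  symm := by
    constructor
    rintro (v | b) (w | c) h
    exacts [h.symm, h, h, h]
  loopless := by
    constructor
    rintro (v | b) h
    exacts [G.irrefl h, h]

section Extension

variable (G : SimpleGraph V) (u v w : V)

@[simp] lemma extendByConeAndPendant_adj_inl_inl :
    (G.extendByConeAndPendant u).Adj (inl v) (inl w) ↔ G.Adj v w := Iff.rfl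
@[simp] lemma extendByConeAndPendant_adj_inl_inr_true :
    (G.extendByConeAndPendant u).Adj (inl v) (inr true) ↔ v ≠ u := Iff.rfl
@[simp] lemma extendByConeAndPendant_adj_inl_inr_false :
    (G.extendByConeAndPendant u).Adj (inl v) (inr false) ↔ v = u := Iff.rfl
@[simp] lemma extendByConeAndPendant_adj_inr_true_inl :
    (G.extendByConeAndPendant u).Adj (inr true) (inl v) ↔ v ≠ u := Iff.rfl
@[simp] lemma extendByConeAndPendant_adj_inr_false_inl :
    (G.extendByConeAndPendant u).Adj (inr false) (inl v) ↔ v = u := Iff.rfl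
@[simp] lemma extendByConeAndPendant_not_adj_inr_inr (b c : Bool) :
    ¬ (G.extendByConeAndPendant u).Adj (inr b) (inr c) := id

lemma isExtension_extendByConeAndPendant : G.IsExtension (G.extendByConeAndPendant u) :=
  fun _ _ => Iff.rfl

end Extension

section ExtensionModule

variable {G : SimpleGraph V} {u : V} {M : Set (V ⊕ Bool)}

lemma IsModule.eq_univ_of_inr_mem (hM : (G.extendByConeAndPendant u).IsModule M)
    (ht : inr true ∈ M) (hf : inr false ∈ M) : M = univ := by
  refine eq_univ_of_forall fun z => by_contra fun hz => ?_
  rcases z with v | _ | _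
  · simpa using hM.adj_iff_adj hz ht hf
  · exact hz hf
  · exact hz ht

lemma IsModule.eq_singleton_of_inr_false_mem {w : V} (hw : G.Adj u w)
    (hM : (G.extendByConeAndPendant u).IsModule M)
    (hf : inr false ∈ M) (ht : inr true ∉ M) : M = {inr false} := by
  have hinl {v : V} (hv : inl v ∈ M) : v = u := by
    simpa using (hM _ ht).resolve_left (fun h => h _ hf) _ hv
  have hwM : inl w ∉ M := fun h => hw.ne' (hinl h)
  have huM : inl u ∉ M := fun h => by
    simpa [hw.symm, hw.ne'] using hM.adj_iff_adj hwM h hf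
  refine eq_singleton_iff_unique_mem.2 ⟨hf, ?_⟩
  rintro (v | _ | _) hv
  · exact absurd (hinl hv ▸ hv) huM
  · rfl
  · exact absurd hv ht

variable [Fintype V]

lemma IsModule.eq_singleton_of_inr_true_mem (hG : G.IsPrimeGraph)
    (hu : ∀ x ≠ u, G.neighborSet x ≠ {x, u}ᶜ) (hM : (G.extendByConeAndPendant u).IsModule M)
    (ht : inr true ∈ M) (hf : inr false ∉ M) : M = {inr true} := by
  have huM : inl u ∉ M := fun h =>
    (hM _ hf).elim (fun h' => h' _ ht) (fun h' => h' _ h (by simp))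
  have hu_none : ∀ m ∈ M, ¬ (G.extendByConeAndPendant u).Adj (inl u) m :=
    (hM _ huM).resolve_left fun h => by simpa using h _ ht
  have hv_all {v : V} (hvu : v ≠ u) (hv : inl v ∉ M) :
      ∀ m ∈ M, (G.extendByConeAndPendant u).Adj (inl v) m :=
    (hM _ hv).resolve_right fun h => h _ ht (by simpa using hvu)
  rcases hG.subsingleton_or_eq_univ (hM.preimage (f := inl) fun _ _ => Iff.rfl) with hS | hS
  · rcases (inl ⁻¹' M).eq_empty_or_nonempty with hS₀ | ⟨x, hx⟩
    · refine eq_singleton_iff_unique_mem.2 ⟨ht, ?_⟩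
      rintro (v | _ | _) hv
      · exact absurd (show v ∈ inl ⁻¹' M from hv) (hS₀ ▸ notMem_empty v)
      · exact absurd hv hf
      · rfl
    · refine absurd ?_ (hu x (ne_of_mem_of_not_mem hx (huM : u ∉ inl ⁻¹' M)))
      ext v
      simp only [mem_neighborSet, mem_compl_iff, mem_insert_iff, mem_singleton_iff, not_or]
      refine ⟨fun h => ⟨h.ne', ?_⟩, fun ⟨hvx, hvu⟩ => ?_⟩
      · rintro rfl
        exact hu_none _ hx (by simpa using h.symm)
      · simpa [adj_comm] using hv_all hvu (fun h => hvx (hS h hx)) _ hx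
  · exact absurd (show u ∈ inl ⁻¹' M from hS ▸ mem_univ u) huM

lemma IsModule.subsingleton_of_inr_notMem (hG : G.IsPrimeGraph)
    (hM : (G.extendByConeAndPendant u).IsModule M)
    (ht : inr true ∉ M) (hf : inr false ∉ M) : M.Subsingleton := by
  have hM_inl : M ⊆ range inl := by
    rintro (v | _ | _) hv
    exacts [⟨v, rfl⟩, absurd hv hf, absurd hv ht]
  rcases hG.subsingleton_or_eq_univ (hM.preimage (f := inl) fun _ _ => Iff.rfl) with hS | hS
  · rw [← image_preimage_eq_of_subset hM_inl]
    exact hS.image _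
  · obtain ⟨w, hwu, -⟩ := hG.exists_ne_ne u u
    have hmem (v : V) : inl v ∈ M := show v ∈ inl ⁻¹' M from hS ▸ mem_univ v
    simpa [hwu] using hM.adj_iff_adj ht (hmem u) (hmem w)

lemma IsPrimeGraph.extendByConeAndPendant (hG : G.IsPrimeGraph)
    (hu : ∀ x ≠ u, G.neighborSet x ≠ {x, u}ᶜ) : (G.extendByConeAndPendant u).IsPrimeGraph := by
  refine isPrimeGraph_iff.2 ⟨?_, fun M hM => ?_⟩
  · simp only [Fintype.card_sum, Fintype.card_bool]
    linarith [hG.1]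
  obtain ⟨w, hw⟩ := hG.exists_adj u
  by_cases ht : inr true ∈ M <;> by_cases hf : inr false ∈ M
  · exact Or.inr (hM.eq_univ_of_inr_mem ht hf)
  · exact Or.inl (hM.eq_singleton_of_inr_true_mem hG hu ht hf ▸ subsingleton_singleton)
  · exact Or.inl (hM.eq_singleton_of_inr_false_mem hw hf ht ▸ subsingleton_singleton)
  · exact Or.inl (hM.subsingleton_of_inr_notMem hG ht hf)

end ExtensionModule

end SimpleGraph

/-- a prime graph has a prime two-vertex extension in which the two new
vertices are non-adjacent. -/
theorem exists_prime_two_extension_nonadjacent {V : Type*} [Fintype V]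
    (G : SimpleGraph V) (hG : G.IsPrimeGraph) :
    ∃ H : SimpleGraph (V ⊕ Bool), G.IsExtension H ∧
      ¬ H.Adj (Sum.inr true) (Sum.inr false) ∧ H.IsPrimeGraph := by
  obtain ⟨u, hu⟩ := hG.exists_forall_neighborSet_ne
  exact ⟨G.extendByConeAndPendant u, G.isExtension_extendByConeAndPendant u,
    G.extendByConeAndPendant_not_adj_inr_inr u true false, hG.extendByConeAndPendant hu⟩
end

section
/- For every finite graph G with max(α_M(G), ω_M(G)) ≥ 2, the prime bound satisfies p(G) ≥ ⌈log₂(max(α_M(G), ω_M(G)))⌉. Equivalently: if S is a module of G that is a clique or a stable set with |S| ≥ 2, and H is an extension of G with |V(H) \ V(G)| < log₂(|S|), then H is not prime. -/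
/-- A stable (independent) set: a clique of the complement. -/
def SimpleGraph.IsStableSet {V : Type*} (G : SimpleGraph V) (S : Set V) : Prop :=
  Gᶜ.IsClique S

open Set Sum

namespace SimpleGraph

variable {V W : Type*}

lemma IsModule.mem_of_adj_of_not_adj {G : SimpleGraph V} {M : Set V} (hM : G.IsModule M)
    {x y z : V} (hx : x ∈ M) (hy : y ∈ M) (hzx : G.Adj z x) (hzy : ¬ G.Adj z y) : z ∈ M := by
  by_contra hz
  rcases hM z hz with hall | hnone
  exacts [hzy (hall y hy), hnone x hx hzx]

@[simp] lemma isModule_compl_iff {G : SimpleGraph V} {M : Set V} :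
    Gᶜ.IsModule M ↔ G.IsModule M := by
  refine forall₂_congr fun v hv => ?_
  have hne : ∀ m ∈ M, v ≠ m := fun m hm h => hv (h ▸ hm)
  simp only [compl_adj]
  constructor
  · rintro (h | h)
    exacts [.inr fun m hm => (h m hm).2, .inl fun m hm => not_not.1 fun h' => h m hm ⟨hne m hm, h'⟩]
  · rintro (h | h)
    exacts [.inr fun m hm h' => h'.2 (h m hm), .inl fun m hm => ⟨hne m hm, h m hm⟩]

lemma IsModule.subset_of_isClique {G : SimpleGraph V} {S T : Set V} (hS : G.IsModule S)
    (hSc : G.IsClique S) (hTS : T ⊆ S) : G.IsModule T := by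
  intro v hv
  by_cases hvS : v ∈ S
  · exact .inl fun m hm => hSc hvS (hTS hm) fun h => hv (h ▸ hm)
  · exact (hS v hvS).imp (fun h m hm => h m (hTS hm)) fun h m hm => h m (hTS hm)

lemma IsModule.subset_of_isStableSet {G : SimpleGraph V} {S T : Set V} (hS : G.IsModule S)
    (hSs : G.IsStableSet S) (hTS : T ⊆ S) : G.IsModule T :=
  isModule_compl_iff.1 ((isModule_compl_iff.2 hS).subset_of_isClique hSs hTS)

lemma isModule_pair_iff {G : SimpleGraph V} {x y : V} :
    G.IsModule {x, y} ↔ ∀ v, v ≠ x → v ≠ y → (G.Adj v x ↔ G.Adj v y) := by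
  simp only [IsModule, mem_insert_iff, mem_singleton_iff, not_or, and_imp, forall_eq_or_imp,
    forall_eq]
  refine forall_congr' fun v => forall₂_congr fun _ _ => ?_
  tauto

lemma IsPrimeGraph.not_isModule_pair [Fintype V] {G : SimpleGraph V} (hG : G.IsPrimeGraph)
    {x y : V} (hxy : x ≠ y) : ¬ G.IsModule {x, y} := by
  intro hM
  rcases hG.2 _ hM with h | ⟨v, h⟩ | h
  · exact (insert_nonempty x {y}).ne_empty h
  · exact hxy ((h ▸ subsingleton_singleton) (mem_insert x {y}) (mem_insert_of_mem x rfl))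
  · have hcard := hG.1
    have : Fintype.card V ≤ 2 := by
      rw [← Nat.card_eq_fintype_card, ← ncard_univ, ← h]
      exact (ncard_insert_le _ _).trans (by simp)
    omega

lemma IsExtension.isModule_pair {G : SimpleGraph V} {H : SimpleGraph (V ⊕ W)}
    (hH : G.IsExtension H) {s t : V} (hst : G.IsModule {s, t})
    (hW : ∀ w, H.Adj (inl s) (inr w) ↔ H.Adj (inl t) (inr w)) :
    H.IsModule {inl s, inl t} := by
  rw [isModule_pair_iff] at hst ⊢
  rintro (v | w) hvs hvt
  · rw [hH, hH]
    exact hst v (fun h => hvs (h ▸ rfl)) fun h => hvt (h ▸ rfl)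
  · simpa only [H.adj_comm (inr w)] using hW w

lemma IsExtension.not_isPrimeGraph_of_two_pow_lt [Fintype V] [Fintype W] {G : SimpleGraph V}
    {H : SimpleGraph (V ⊕ W)} (hH : G.IsExtension H) {S : Set V} (hS : G.IsModule S)
    (hSh : G.IsClique S ∨ G.IsStableSet S) (hcard : 2 ^ Fintype.card W < S.ncard) :
    ¬ H.IsPrimeGraph := by
  intro hprime
  obtain ⟨s, hs, t, ht, hst, hN⟩ := exists_ne_map_eq_of_ncard_lt_of_maps_to
    (t := (univ : Set (Set W))) (f := fun s => {w | H.Adj (inl s) (inr w)})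
    (by rwa [ncard_univ, Nat.card_eq_fintype_card, Fintype.card_set]) fun _ _ => mem_univ _
  have hpair : {s, t} ⊆ S := insert_subset hs (singleton_subset_iff.2 ht)
  have hGst : G.IsModule {s, t} :=
    hSh.elim (hS.subset_of_isClique · hpair) (hS.subset_of_isStableSet · hpair)
  exact hprime.not_isModule_pair (inl_injective.ne hst)
    (hH.isModule_pair hGst fun w => Set.ext_iff.1 hN w)

/-- The new vertex `e.symm (some u)` is a pendant vertex at `u`, and `e.symm none` is adjacent to
every old vertex (`∀ v ∈ e w, v = u` says `e w = none ∨ e w = some u`). -/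
def pendantHubExtension (G : SimpleGraph V) (e : W ≃ Option V) : SimpleGraph (V ⊕ W) where
  Adj
    | inl u, inl v => G.Adj u v
    | inl u, inr w => ∀ v ∈ e w, v = u
    | inr w, inl u => ∀ v ∈ e w, v = u
    | inr _, inr _ => False
  symm := ⟨by rintro (u | w) (v | w') h <;> first | exact h.symm | exact h⟩
  loopless := ⟨by rintro (u | w) h; exacts [G.loopless.irrefl u h, h]⟩

section pendantHubExtension

variable (G : SimpleGraph V) (e : W ≃ Option V)

@[simp] lemma pendantHubExtension_adj_inl_inl {u v : V} :
    (G.pendantHubExtension e).Adj (inl u) (inl v) ↔ G.Adj u v := Iff.rfl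

@[simp] lemma pendantHubExtension_adj_inl_inr {u : V} {w : W} :
    (G.pendantHubExtension e).Adj (inl u) (inr w) ↔ ∀ v ∈ e w, v = u := Iff.rfl

@[simp] lemma pendantHubExtension_adj_inr_inl {u : V} {w : W} :
    (G.pendantHubExtension e).Adj (inr w) (inl u) ↔ ∀ v ∈ e w, v = u := Iff.rfl

@[simp] lemma pendantHubExtension_adj_inr_inr {w w' : W} :
    ¬ (G.pendantHubExtension e).Adj (inr w) (inr w') := id

lemma isExtension_pendantHubExtension : G.IsExtension (G.pendantHubExtension e) :=
  fun _ _ => Iff.rfl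

namespace pendantHubExtension

variable {G e} {M : Set (V ⊕ W)}

lemma hub_mem_of_inl_mem_of_inr_mem (hM : (G.pendantHubExtension e).IsModule M)
    {u : V} {w : W} (hu : inl u ∈ M) (hw : inr w ∈ M) : inr (e.symm none) ∈ M :=
  hM.mem_of_adj_of_not_adj hu hw (by simp) (by simp)

lemma pendant_mem_of_inl_mem_of_hub_mem (hM : (G.pendantHubExtension e).IsModule M) {u : V}
    (hu : inl u ∈ M) (hc : inr (e.symm none) ∈ M) : inr (e.symm (some u)) ∈ M :=
  hM.mem_of_adj_of_not_adj hu hc (by simp) (by simp)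

lemma inl_mem_of_hub_mem_of_pendant_mem (hM : (G.pendantHubExtension e).IsModule M) {u v : V}
    (hc : inr (e.symm none) ∈ M) (hu : inr (e.symm (some u)) ∈ M) (hvu : v ≠ u) : inl v ∈ M :=
  hM.mem_of_adj_of_not_adj hc hu (by simp) (by simpa using hvu.symm)

lemma exists_inl_mem_of_inr_mem (hM : (G.pendantHubExtension e).IsModule M)
    [Nontrivial V] {u : V} {w w' : W} (hw : inr w ∈ M) (hw' : inr w' ∈ M) (hww' : w ≠ w')
    (hu : e w = some u) : ∃ v, inl v ∈ M := by
  rcases hu' : e w' with _ | u'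
  · obtain ⟨v, hvu⟩ := exists_ne u
    exact ⟨v, hM.mem_of_adj_of_not_adj hw' hw (by simp [hu']) (by simpa [hu] using hvu.symm)⟩
  · have hu'u : u' ≠ u := fun h => hww' (e.injective (by rw [hu, hu', h]))
    exact ⟨u', hM.mem_of_adj_of_not_adj hw' hw (by simp [hu']) (by simpa [hu] using hu'u.symm)⟩

lemma exists_inl_mem_of_nontrivial (hM : (G.pendantHubExtension e).IsModule M) [Nontrivial V]
    (hMn : M.Nontrivial) : ∃ u, inl u ∈ M := by
  obtain ⟨x, hx, y, hy, hxy⟩ := hMn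
  rcases x with u | w
  · exact ⟨u, hx⟩
  rcases y with u | w'
  · exact ⟨u, hy⟩
  have hww' : w ≠ w' := fun h => hxy (h ▸ rfl)
  rcases hew : e w with _ | u
  · obtain ⟨u', hu'⟩ := Option.ne_none_iff_exists'.1 fun h => hww' (e.injective (hew.trans h.symm))
    exact exists_inl_mem_of_inr_mem hM hy hx hww'.symm hu'
  · exact exists_inl_mem_of_inr_mem hM hx hy hww' hew

lemma hub_mem_of_nontrivial (hM : (G.pendantHubExtension e).IsModule M) [Nontrivial V]
    (hMn : M.Nontrivial) : inr (e.symm none) ∈ M := by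
  obtain ⟨u, hu⟩ := exists_inl_mem_of_nontrivial hM hMn
  obtain ⟨y, hy, hyu⟩ := hMn.exists_ne (inl u)
  rcases y with v | w
  · have hvu : v ≠ u := fun h => hyu (h ▸ rfl)
    have hp : inr (e.symm (some u)) ∈ M :=
      hM.mem_of_adj_of_not_adj hu hy (by simp) (by simpa using hvu.symm)
    exact hub_mem_of_inl_mem_of_inr_mem hM hu hp
  · exact hub_mem_of_inl_mem_of_inr_mem hM hu hy

lemma eq_univ_of_nontrivial (hM : (G.pendantHubExtension e).IsModule M) [Nontrivial V]
    (hMn : M.Nontrivial) : M = univ := by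
  have hc := hub_mem_of_nontrivial hM hMn
  obtain ⟨u, hu⟩ := exists_inl_mem_of_nontrivial hM hMn
  have hinl : ∀ x, inl x ∈ M := fun x => by
    rcases eq_or_ne x u with rfl | hxu
    exacts [hu, inl_mem_of_hub_mem_of_pendant_mem hM hc
      (pendant_mem_of_inl_mem_of_hub_mem hM hu hc) hxu]
  refine eq_univ_of_forall ?_
  rintro (x | w)
  · exact hinl x
  · rcases hw : e w with _ | x
    · exact e.symm_apply_eq.2 hw.symm ▸ hc
    · exact e.symm_apply_eq.2 hw.symm ▸ pendant_mem_of_inl_mem_of_hub_mem hM (hinl x) hc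

end pendantHubExtension

lemma isPrimeGraph_pendantHubExtension [Fintype V] [Fintype W] [Nontrivial V] :
    (G.pendantHubExtension e).IsPrimeGraph := by
  refine ⟨?_, fun M hM => ?_⟩
  · rw [Fintype.card_sum, Fintype.card_congr e, Fintype.card_option]
    have := Fintype.one_lt_card (α := V)
    omega
  · rcases M.subsingleton_or_nontrivial with hMs | hMn
    · exact hMs.eq_empty_or_singleton.elim .inl (.inr ∘ .inl)
    · exact .inr (.inr (pendantHubExtension.eq_univ_of_nontrivial hM hMn))

end pendantHubExtension

lemma exists_isExtension_isPrimeGraph [Fintype V] [Nontrivial V] (G : SimpleGraph V) :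
    ∃ p, ∃ H : SimpleGraph (V ⊕ Fin p), G.IsExtension H ∧ H.IsPrimeGraph :=
  let e : Fin (Fintype.card V + 1) ≃ Option V :=
    (Fintype.equivFinOfCardEq Fintype.card_option).symm
  ⟨_, _, G.isExtension_pendantHubExtension e, G.isPrimeGraph_pendantHubExtension e⟩

lemma exists_isModule_isClique_ncard_eq_modularCliqueNumber [Fintype V] (G : SimpleGraph V) :
    ∃ M : Set V, G.IsModule M ∧ G.IsClique M ∧ M.ncard = G.modularCliqueNumber := by
  have hbdd : BddAbove {n | ∃ M : Set V, G.IsModule M ∧ G.IsClique M ∧ M.ncard = n} := by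
    refine ⟨Fintype.card V, ?_⟩
    rintro _ ⟨M, -, -, rfl⟩
    exact (ncard_le_card M).trans_eq Nat.card_eq_fintype_card
  refine Nat.sSup_mem ?_ hbdd
  exact ⟨0, ∅, fun _ _ => .inl fun _ h => h.elim, isClique_empty, ncard_empty V⟩

lemma exists_isModule_ncard_eq_max [Fintype V] (G : SimpleGraph V) :
    ∃ S : Set V, G.IsModule S ∧ (G.IsClique S ∨ G.IsStableSet S) ∧
      S.ncard = max G.modularStabilityNumber G.modularCliqueNumber := by
  rcases le_total G.modularStabilityNumber G.modularCliqueNumber with hle | hle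
  · obtain ⟨S, hS, hSc, hSn⟩ := G.exists_isModule_isClique_ncard_eq_modularCliqueNumber
    exact ⟨S, hS, .inl hSc, by rw [hSn, max_eq_right hle]⟩
  · obtain ⟨S, hS, hSs, hSn⟩ := Gᶜ.exists_isModule_isClique_ncard_eq_modularCliqueNumber
    exact ⟨S, isModule_compl_iff.1 hS, .inr hSs, by rw [hSn, max_eq_left hle]; rfl⟩

end SimpleGraph

/-- lower bound `p(G) ≥ ⌈log₂(max(α_M(G), ω_M(G)))⌉`, and its equivalent
formulation about extensions that are too small. -/
theorem primeBound_lower_bound {V : Type*} [Fintype V] (G : SimpleGraph V)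
    (h : 2 ≤ max G.modularStabilityNumber G.modularCliqueNumber) :
    Nat.clog 2 (max G.modularStabilityNumber G.modularCliqueNumber) ≤ G.primeBound ∧
    ∀ S : Set V, G.IsModule S → (G.IsClique S ∨ G.IsStableSet S) → 2 ≤ S.ncard →
      ∀ (p : ℕ) (H : SimpleGraph (V ⊕ Fin p)), G.IsExtension H →
        2 ^ p < S.ncard → ¬ H.IsPrimeGraph := by
  refine ⟨?_, fun S hS hSh _ p H hH hp =>
    hH.not_isPrimeGraph_of_two_pow_lt hS hSh (by rwa [Fintype.card_fin])⟩
  obtain ⟨S, hS, hSh, hSn⟩ := G.exists_isModule_ncard_eq_max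
  have : Nontrivial V := nontrivial_of_nontrivial (one_lt_ncard_iff_nontrivial.1 (hSn ▸ h))
  refine le_csInf G.exists_isExtension_isPrimeGraph fun p ⟨H, hH, hprime⟩ => ?_
  rw [Nat.clog_le_iff_le_pow one_lt_two, ← hSn]
  exact not_lt.1 fun hp =>
    hH.not_isPrimeGraph_of_two_pow_lt hS hSh (by rwa [Fintype.card_fin]) hprime
end
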